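/- Suppose F₋ > 2F₊ > 0. Then for every w ∈ ℝ², D_sh(w) = max{⟨α₁, w⟩, ⟨α₂, w⟩, ⟨α₃, w⟩} where α₁ = (-F₊, F₊), α₂ = (2F₊, F₊), α₃ = (-F₊, -2F₊). Consequently D_sh(w) = max_{ξ ∈ C*_A} ⟨ξ, w⟩ where C*_A is the convex hull of {α₁, α₂, α₃}. -/

import Mathlib

noncomputable def d (Fp Fm x : ℝ) : ℝ := Fp * max x 0 - Fm * min x 0

noncomputable def D (Fp Fm : ℝ) (w : ℝ × ℝ) (v : ℝ) : ℝ :=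
  d Fp Fm (v - w.1) + d Fp Fm v + d Fp Fm (v + w.2)

noncomputable def Dsh (Fp Fm : ℝ) (w : ℝ × ℝ) : ℝ := ⨅ v : ℝ, D Fp Fm w v

/-- Standard inner product on ℝ². -/
def dot (x y : ℝ × ℝ) : ℝ := x.1 * y.1 + x.2 * y.2

/-!
`d` is the support function of the interval `[-Fm, Fp]`, i.e. `c * x ≤ d x` for every `c` in it.
Summing three such bounds with weights `c₁ + c₂ + c₃ = 0` kills `v`, so `D w v ≥ -c₁ w₁ + c₃ w₂`;
the weights `(Fp, -2Fp, Fp)`, `(-2Fp, Fp, Fp)`, `(Fp, Fp, -2Fp)` lie in `[-Fm, Fp]` because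
`0 ≤ Fp` and `2Fp ≤ Fm`, and give the three vertices. Conversely, at `v = max 0 (max w₁ (-w₂))`
all three arguments of `d` are nonnegative, and `D` evaluates to the largest vertex value.
Finally a linear functional attains its maximum on a convex hull at one of the generating points.
-/

lemma IsGreatest.image_convexHull {E : Type*} [AddCommGroup E] [Module ℝ E] {f : E → ℝ}
    {s : Set E} {M : ℝ} (hf : ConvexOn ℝ (convexHull ℝ s) f) (hM : IsGreatest (f '' s) M) :
    IsGreatest (f '' convexHull ℝ s) M := by
  refine ⟨Set.image_mono (subset_convexHull ℝ s) hM.1, ?_⟩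
  rintro _ ⟨x, hx, rfl⟩
  obtain ⟨y, hy, hxy⟩ := hf.exists_ge_of_mem_convexHull (subset_convexHull ℝ s) hx
  exact hxy.trans (hM.2 ⟨y, hy, rfl⟩)

lemma convexOn_dot_left {s : Set (ℝ × ℝ)} (hs : Convex ℝ s) (w : ℝ × ℝ) :
    ConvexOn ℝ s (fun ξ => dot ξ w) := by
  refine ⟨hs, fun x _ y _ a b _ _ _ => le_of_eq ?_⟩
  simp only [dot, Prod.fst_add, Prod.snd_add, Prod.smul_fst, Prod.smul_snd, smul_eq_mul]
  ring

section Dsh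

variable {Fp Fm : ℝ}

lemma mul_le_d {c : ℝ} (hc : c ∈ Set.Icc (-Fm) Fp) (x : ℝ) : c * x ≤ d Fp Fm x := by
  unfold d
  rcases le_total 0 x with hx | hx
  · rw [max_eq_left hx, min_eq_right hx]; nlinarith [hc.2]
  · rw [max_eq_right hx, min_eq_left hx]; nlinarith [hc.1]

lemma d_of_nonneg {x : ℝ} (hx : 0 ≤ x) : d Fp Fm x = Fp * x := by
  rw [d, max_eq_left hx, min_eq_right hx]; ring

lemma dot_le_D {a b : ℝ} (ha : -a ∈ Set.Icc (-Fm) Fp) (hab : a - b ∈ Set.Icc (-Fm) Fp)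
    (hb : b ∈ Set.Icc (-Fm) Fp) (w : ℝ × ℝ) (v : ℝ) : dot (a, b) w ≤ D Fp Fm w v := by
  have h₁ := mul_le_d ha (v - w.1)
  have h₂ := mul_le_d hab v
  have h₃ := mul_le_d hb (v + w.2)
  calc dot (a, b) w = -a * (v - w.1) + (a - b) * v + b * (v + w.2) := by rw [dot]; ring
    _ ≤ D Fp Fm w v := by rw [D]; linarith

lemma max_dot_vertices_le_D (hp : 0 ≤ Fp) (hm : 2 * Fp ≤ Fm) (w : ℝ × ℝ) (v : ℝ) :
    max (dot (-Fp, Fp) w) (max (dot (2 * Fp, Fp) w) (dot (-Fp, -2 * Fp) w)) ≤ D Fp Fm w v := by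
  have mem : ∀ c, -2 * Fp ≤ c → c ≤ Fp → c ∈ Set.Icc (-Fm) Fp :=
    fun c h₁ h₂ => ⟨by linarith, h₂⟩
  refine max_le ?_ (max_le ?_ ?_) <;>
    exact dot_le_D (mem _ (by linarith) (by linarith)) (mem _ (by linarith) (by linarith))
      (mem _ (by linarith) (by linarith)) w v

lemma D_of_nonneg {w : ℝ × ℝ} {v : ℝ} (h₁ : 0 ≤ v - w.1) (h₂ : 0 ≤ v) (h₃ : 0 ≤ v + w.2) :
    D Fp Fm w v = Fp * (3 * v - w.1 + w.2) := by
  rw [D, d_of_nonneg h₁, d_of_nonneg h₂, d_of_nonneg h₃]; ring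

lemma D_max_eq (hp : 0 ≤ Fp) (w : ℝ × ℝ) :
    D Fp Fm w (max 0 (max w.1 (-w.2))) =
      max (dot (-Fp, Fp) w) (max (dot (2 * Fp, Fp) w) (dot (-Fp, -2 * Fp) w)) := by
  have hw : w.1 ≤ max 0 (max w.1 (-w.2)) ∧ -w.2 ≤ max 0 (max w.1 (-w.2)) := by
    simp only [le_max_iff, le_refl, or_true, true_or, and_self]
  have hmono : Monotone fun t => Fp * (3 * t - w.1 + w.2) :=
    fun s t hst => by dsimp only; gcongr
  rw [D_of_nonneg (by linarith) (le_max_left _ _) (by linarith), hmono.map_max, hmono.map_max]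
  simp only [dot]
  congr 1 <;> [ring; congr 1 <;> ring]

theorem Dsh_eq_max_dot_vertices (hp : 0 ≤ Fp) (hm : 2 * Fp ≤ Fm) (w : ℝ × ℝ) :
    Dsh Fp Fm w =
      max (dot (-Fp, Fp) w) (max (dot (2 * Fp, Fp) w) (dot (-Fp, -2 * Fp) w)) :=
  IsGLB.ciInf_eq (IsLeast.isGLB
    ⟨⟨_, D_max_eq hp w⟩, by rintro _ ⟨v, rfl⟩; exact max_dot_vertices_le_D hp hm w v⟩)

end Dsh

theorem Dsh_max_of_vertices (Fp Fm : ℝ) (hp : 0 < Fp) (hm : 2 * Fp < Fm) :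
    (∀ w : ℝ × ℝ,
      Dsh Fp Fm w =
        max (dot (-Fp, Fp) w) (max (dot (2 * Fp, Fp) w) (dot (-Fp, -2 * Fp) w))) ∧
    (∀ w : ℝ × ℝ,
      IsGreatest {x : ℝ | ∃ ξ ∈ convexHull ℝ
          ({(-Fp, Fp), (2 * Fp, Fp), (-Fp, -2 * Fp)} : Set (ℝ × ℝ)), x = dot ξ w}
        (Dsh Fp Fm w)) := by
  refine ⟨Dsh_eq_max_dot_vertices hp.le hm.le, fun w => ?_⟩
  have himage : {x : ℝ | ∃ ξ ∈ convexHull ℝ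
      ({(-Fp, Fp), (2 * Fp, Fp), (-Fp, -2 * Fp)} : Set (ℝ × ℝ)), x = dot ξ w} =
      (fun ξ => dot ξ w) '' convexHull ℝ {(-Fp, Fp), (2 * Fp, Fp), (-Fp, -2 * Fp)} := by
    ext x; simp only [Set.mem_ofPred_eq, Set.mem_image, eq_comm]
  rw [himage, Dsh_eq_max_dot_vertices hp.le hm.le]
  refine IsGreatest.image_convexHull (convexOn_dot_left (convex_convexHull ℝ _) w) ?_
  rw [Set.image_insert_eq, Set.image_insert_eq, Set.image_singleton]
  exact isGreatest_pair.insert _
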